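/- arXiv:2402.00592 — 6 statements merged into one kernel-verified Lean document; each statement's English description precedes it below -/
import Mathlib

section
/- Let m be a basic probability assignment on a finite nonempty label set 𝒴, let s̃ ⊆ 𝒴 be nonempty, and let ỹ ∈ s̃. If bel({ỹ}) > 1/2, then the set { y ∈ 𝒴 : pl({y}) ≥ max_{y' ∈ s̃} bel({y'}) } equals the singleton {ỹ}; that is, ỹ is a confident prediction. -/
/-!
Since `bel {y₀} = m {y₀} > 1/2`, less than half of the total mass is left for the focal sets
not equal to `{y₀}`. Hence `m {y₀}` is the largest singleton mass, so it is the maximal belief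
over `s`, while `pl {y} < 1/2` for every `y ≠ y₀` because `{y₀}` is disjoint from `{y}`.
-/

/-- Belief function of a basic probability assignment: `bel m A = ∑_{B ⊆ A} m B`. -/
noncomputable def bel {𝒴 : Type*} [DecidableEq 𝒴] (m : Finset 𝒴 → ℝ) (A : Finset 𝒴) : ℝ :=
  ∑ B ∈ A.powerset, m B

/-- Plausibility function of a basic probability assignment:
`pl m A = ∑_{B ⊆ 𝒴, A ∩ B ≠ ∅} m B`. -/
noncomputable def pl {𝒴 : Type*} [Fintype 𝒴] [DecidableEq 𝒴] (m : Finset 𝒴 → ℝ)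
    (A : Finset 𝒴) : ℝ :=
  ∑ B ∈ Finset.univ.filter (fun B => (A ∩ B).Nonempty), m B

section MassFunction

variable {𝒴 : Type*} [DecidableEq 𝒴] {m : Finset 𝒴 → ℝ}

theorem bel_singleton (hm_empty : m ∅ = 0) (y : 𝒴) : bel m {y} = m {y} := by
  have hpowerset : ({y} : Finset 𝒴).powerset = {∅, {y}} := by
    ext B
    simp [Finset.subset_singleton_iff]
  rw [bel, hpowerset, Finset.sum_pair (Finset.singleton_ne_empty y).symm, hm_empty, zero_add]

variable [Fintype 𝒴]

theorem le_pl_of_inter_nonempty (hm_nonneg : ∀ A, 0 ≤ m A) {A B : Finset 𝒴}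
    (hAB : (A ∩ B).Nonempty) : m B ≤ pl m A :=
  Finset.single_le_sum (fun C _ => hm_nonneg C) (by simpa using hAB)

theorem pl_add_le_one_of_disjoint (hm_nonneg : ∀ A, 0 ≤ m A) (hm_sum : ∑ A, m A = 1)
    {A B : Finset 𝒴} (hAB : Disjoint A B) : pl m A + m B ≤ 1 := by
  have hB : B ∉ Finset.univ.filter (fun C => (A ∩ C).Nonempty) := by
    simpa [Finset.not_nonempty_iff_eq_empty, ← Finset.disjoint_iff_inter_eq_empty] using hAB
  have hle := Finset.sum_le_sum_of_subset_of_nonneg (Finset.subset_univ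
    (insert B (Finset.univ.filter (fun C => (A ∩ C).Nonempty))))
    (fun C _ _ => hm_nonneg C)
  rw [Finset.sum_insert hB, hm_sum] at hle
  rw [pl]
  linarith

theorem add_le_one_of_ne (hm_nonneg : ∀ A, 0 ≤ m A) (hm_sum : ∑ A, m A = 1)
    {A B : Finset 𝒴} (hAB : A ≠ B) : m A + m B ≤ 1 := by
  have hle := Finset.sum_le_sum_of_subset_of_nonneg (Finset.subset_univ {A, B})
    (fun C _ _ => hm_nonneg C)
  rwa [Finset.sum_pair hAB, hm_sum] at hle

theorem le_of_half_lt (hm_nonneg : ∀ A, 0 ≤ m A) (hm_sum : ∑ A, m A = 1)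
    {A : Finset 𝒴} (hA : 1 / 2 < m A) (B : Finset 𝒴) : m B ≤ m A := by
  rcases eq_or_ne B A with rfl | hBA
  · rfl
  · linarith [add_le_one_of_ne hm_nonneg hm_sum hBA]

end MassFunction

theorem confident_of_bel_gt_half_general {𝒴 : Type*} [Fintype 𝒴] [DecidableEq 𝒴]
    (m : Finset 𝒴 → ℝ)
    (hm_nonneg : ∀ A : Finset 𝒴, 0 ≤ m A)
    (hm_empty : m ∅ = 0)
    (hm_sum : ∑ A : Finset 𝒴, m A = 1)
    (s : Finset 𝒴) (hs : s.Nonempty) (y₀ : 𝒴) (hy₀ : y₀ ∈ s)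
    (hbel : 1 / 2 < bel m {y₀}) :
    Finset.univ.filter
        (fun y => s.sup' hs (fun y' => bel m {y'}) ≤ pl m {y}) = {y₀} := by
  rw [bel_singleton hm_empty] at hbel
  have hmax : s.sup' hs (fun y' => bel m {y'}) = m {y₀} := by
    refine le_antisymm (Finset.sup'_le _ _ fun y _ => ?_) ?_
    · rw [bel_singleton hm_empty]
      exact le_of_half_lt hm_nonneg hm_sum hbel {y}
    · simpa only [bel_singleton hm_empty] using Finset.le_sup' (fun y' => bel m {y'}) hy₀
  ext y
  simp only [hmax, Finset.mem_filter, Finset.mem_univ, true_and, Finset.mem_singleton]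
  constructor
  · intro hpl
    by_contra hne
    have hdisj : Disjoint ({y} : Finset 𝒴) {y₀} := Finset.disjoint_singleton.mpr hne
    linarith [pl_add_le_one_of_disjoint hm_nonneg hm_sum hdisj]
  · rintro rfl
    exact le_pl_of_inter_nonempty hm_nonneg (by simp)

/-- If `bel({y₀}) > 1/2` for some `y₀` in the candidate set `s`, then
`{ y ∈ 𝒴 : pl({y}) ≥ max_{y' ∈ s} bel({y'}) } = {y₀}`, i.e. `y₀` is a confident prediction. -/
theorem confident_of_bel_gt_half {𝒴 : Type*} [Fintype 𝒴] [DecidableEq 𝒴] [Nonempty 𝒴]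
    (m : Finset 𝒴 → ℝ)
    (hm_nonneg : ∀ A : Finset 𝒴, 0 ≤ m A)
    (hm_le_one : ∀ A : Finset 𝒴, m A ≤ 1)
    (hm_empty : m ∅ = 0)
    (hm_sum : ∑ A : Finset 𝒴, m A = 1)
    (s : Finset 𝒴) (hs : s.Nonempty) (y₀ : 𝒴) (hy₀ : y₀ ∈ s)
    (hbel : 1 / 2 < bel m {y₀}) :
    Finset.univ.filter
        (fun y => s.sup' hs (fun y' => bel m {y'}) ≤ pl m {y}) = {y₀} :=
  confident_of_bel_gt_half_general m hm_nonneg hm_empty hm_sum s hs y₀ hy₀ hbel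
end

section
/- For all integers l ≥ 3, k' ≥ 1, i, and j_1, …, j_{l−2} with 0 ≤ i ≤ j_a < k' for every a ∈ {1,…,l−2}, the following inequality of integers holds: C(k', i) · ∏_{a=1}^{l−2} C(k', j_a) ≥ Σ_{b=1}^{i} (−1)^{b+1} · C(k', b) · C(k'−b, i−b) · ∏_{c=1}^{l−2} C(k'−b, j_c−b). -/
/-!
By `C(k', b) C(k' - b, i - b) = C(k', i) C(i, b)` the alternating sum is `C(k', i)` times
`∑_{b=1}^{i} (-1)^(b+1) C(i, b) P b` with `P b = ∏_c C(k' - b, j_c - b)`, so it suffices that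
`∑_{b=0}^{i} (-1)^b C(i, b) P b ≥ 0`, i.e. `(-Δ)^i P 0 ≥ 0`. Each factor
`b ↦ C(k' - b, j_c - b)` is completely monotone on `{0, …, j_c}`, since `(-Δ)^n` of it is again
a binomial coefficient (Pascal's rule), and by the Leibniz rule
`-Δ(fg) = (-Δf) g + f(· + 1) (-Δg)` products of completely monotone sequences are completely
monotone.
-/

open Finset fwdDiff

lemma fwdDiff_iter_neg {M G : Type*} [AddCommMonoid M] [AddCommGroup G] (h : M) (f : M → G)
    (n : ℕ) : Δ_[h] ^[n] (-f) = -Δ_[h] ^[n] f := by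
  simpa using fwdDiff_iter_const_smul h (-1 : ℤ) f n

lemma neg_one_pow_mul_fwdDiff_iter_eq_sum (f : ℕ → ℤ) (n y : ℕ) :
    (-1) ^ n * Δ_[1] ^[n] f y
      = ∑ k ∈ range (n + 1), (-1) ^ k * (n.choose k : ℤ) * f (y + k) := by
  rw [fwdDiff_iter_eq_sum_shift, mul_sum]
  refine sum_congr rfl fun k hk => ?_
  have hkn : k ≤ n := Nat.lt_succ_iff.mp (mem_range.mp hk)
  rw [smul_eq_mul, smul_eq_mul, mul_one, ← mul_assoc, ← mul_assoc, ← pow_add,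
    show n + (n - k) = k + 2 * (n - k) by omega, pow_add, pow_mul]
  simp

/-- `(-Δ)ⁿ f x ≥ 0` whenever it only involves the values `f 0, …, f N`. -/
def CompletelyMonotoneOn (N : ℕ) (f : ℕ → ℤ) : Prop :=
  ∀ n x, x + n ≤ N → 0 ≤ (-1) ^ n * Δ_[1] ^[n] f x

namespace CompletelyMonotoneOn

variable {N : ℕ} {f g : ℕ → ℤ}

lemma nonneg (hf : CompletelyMonotoneOn N f) {x : ℕ} (hx : x ≤ N) : 0 ≤ f x := by
  simpa using hf 0 x hx

lemma mono {M : ℕ} (hf : CompletelyMonotoneOn N f) (hMN : M ≤ N) : CompletelyMonotoneOn M f :=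
  fun n x hx => hf n x (hx.trans hMN)

lemma neg_fwdDiff (hf : CompletelyMonotoneOn (N + 1) f) : CompletelyMonotoneOn N (-Δ_[1] f) := by
  intro n x hx
  have h := hf (n + 1) x (by omega)
  rw [Function.iterate_succ_apply, pow_succ] at h
  rw [fwdDiff_iter_neg, Pi.neg_apply]
  linarith

lemma comp_add_one (hf : CompletelyMonotoneOn (N + 1) f) :
    CompletelyMonotoneOn N (fun x => f (x + 1)) := by
  intro n x hx
  rw [fwdDiff_iter_comp_add]
  exact hf n (x + 1) (by omega)

lemma const {c : ℤ} (hc : 0 ≤ c) : CompletelyMonotoneOn N (fun _ => c) := by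
  rintro (_ | n) x -
  · simpa using hc
  · rw [Function.iterate_succ_apply, fwdDiff_const, Function.iterate_fixed (fwdDiff_const 1 0)]
    simp

lemma mul (hf : CompletelyMonotoneOn N f) (hg : CompletelyMonotoneOn N g) :
    CompletelyMonotoneOn N (f * g) := by
  intro n
  induction n generalizing N f g with
  | zero => intro x hx; simpa using mul_nonneg (hf.nonneg hx) (hg.nonneg hx)
  | succ n ih =>
    intro x hx
    obtain ⟨M, rfl⟩ : ∃ M, N = M + 1 := ⟨N - 1, by omega⟩
    have leibniz : -Δ_[1] (f * g) = (-Δ_[1] f) * g + (fun x => f (x + 1)) * (-Δ_[1] g) := by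
      ext x
      simp only [fwdDiff, Pi.neg_apply, Pi.add_apply, Pi.mul_apply]
      ring
    calc (0 : ℤ)
        ≤ (-1) ^ n * Δ_[1] ^[n] (-Δ_[1] f * g) x
          + (-1) ^ n * Δ_[1] ^[n] ((fun x => f (x + 1)) * -Δ_[1] g) x :=
          add_nonneg (ih hf.neg_fwdDiff (hg.mono (by omega)) x (by omega))
            (ih hf.comp_add_one hg.neg_fwdDiff x (by omega))
      _ = (-1) ^ (n + 1) * Δ_[1] ^[n + 1] (f * g) x := by
        rw [← mul_add, ← Pi.add_apply, ← fwdDiff_iter_add, ← leibniz, fwdDiff_iter_neg,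
          Function.iterate_succ_apply, Pi.neg_apply, pow_succ]
        ring

lemma prod {ι : Type*} {s : Finset ι} {F : ι → ℕ → ℤ}
    (hF : ∀ a ∈ s, CompletelyMonotoneOn N (F a)) :
    CompletelyMonotoneOn N (∏ a ∈ s, F a) := by
  classical
  induction s using Finset.induction_on with
  | empty => rw [prod_empty]; exact const zero_le_one
  | insert a s ha ih =>
    rw [prod_insert ha]
    exact (hF a (mem_insert_self a s)).mul (ih fun b hb => hF b (mem_insert_of_mem hb))

lemma sum_Icc_le (hf : CompletelyMonotoneOn N f) :
    ∑ b ∈ Icc 1 N, (-1) ^ (b + 1) * (N.choose b : ℤ) * f b ≤ f 0 := by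
  have h := hf N 0 (by simp)
  rw [neg_one_pow_mul_fwdDiff_iter_eq_sum, Nat.range_succ_eq_Icc_zero,
    ← insert_Icc_add_one_left_eq_Icc N.zero_le, sum_insert (by simp)] at h
  simp only [pow_zero, Nat.choose_zero_right, Nat.cast_one, mul_one, zero_add] at h
  simp only [pow_succ, mul_neg_one, neg_mul, sum_neg_distrib]
  linarith

end CompletelyMonotoneOn

lemma neg_one_pow_mul_fwdDiff_iter_choose_sub {K j : ℕ} (hjK : j ≤ K) {n x : ℕ}
    (hx : x + n ≤ j) :
    (-1) ^ n * Δ_[1] ^[n] (fun b => ((K - b).choose (j - b) : ℤ)) x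
      = ((K - x - n).choose (j - x) : ℤ) := by
  induction n generalizing x with
  | zero => simp
  | succ n ih =>
    rw [Function.iterate_succ_apply', fwdDiff, pow_succ, mul_comm _ (-1 : ℤ), mul_assoc,
      mul_sub, ih (by omega), ih (by omega)]
    obtain ⟨m, hm⟩ : ∃ m, K - x - n = m + 1 := ⟨K - x - n - 1, by omega⟩
    obtain ⟨r, hr⟩ : ∃ r, j - x = r + 1 := ⟨j - x - 1, by omega⟩
    rw [hm, hr, show K - (x + 1) - n = m by omega, show j - (x + 1) = r by omega,
      show K - x - (n + 1) = m by omega, Nat.choose_succ_succ]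
    push_cast
    ring

lemma completelyMonotoneOn_choose_sub {K j : ℕ} (hjK : j ≤ K) :
    CompletelyMonotoneOn j (fun b => ((K - b).choose (j - b) : ℤ)) := by
  intro n x hx
  rw [neg_one_pow_mul_fwdDiff_iter_choose_sub hjK hx]
  positivity

theorem choose_prod_ge_alternating_sum_general
    (l k' i : ℕ) (j : ℕ → ℕ)
    (hj : ∀ a ∈ Finset.range (l - 2), i ≤ j a ∧ j a < k') :
    ∑ b ∈ Finset.Icc 1 i,
        (-1 : ℤ) ^ (b + 1) * (k'.choose b : ℤ) * ((k' - b).choose (i - b) : ℤ) *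
          ∏ c ∈ Finset.range (l - 2), ((k' - b).choose (j c - b) : ℤ)
      ≤ (k'.choose i : ℤ) * ∏ a ∈ Finset.range (l - 2), (k'.choose (j a) : ℤ) := by
  set P := ∏ c ∈ range (l - 2), fun b => ((k' - b).choose (j c - b) : ℤ) with hP
  have hPcm : CompletelyMonotoneOn i P := CompletelyMonotoneOn.prod fun c hc =>
    (completelyMonotoneOn_choose_sub (hj c hc).2.le).mono (hj c hc).1
  have hterm : ∀ b ∈ Icc 1 i,
      (-1 : ℤ) ^ (b + 1) * (k'.choose b : ℤ) * ((k' - b).choose (i - b) : ℤ) *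
        ∏ c ∈ range (l - 2), ((k' - b).choose (j c - b) : ℤ)
      = k'.choose i * ((-1) ^ (b + 1) * (i.choose b : ℤ) * P b) := by
    intro b hb
    have h : (k'.choose i * i.choose b : ℤ) = k'.choose b * (k' - b).choose (i - b) := by
      exact_mod_cast Nat.choose_mul (mem_Icc.mp hb).2
    rw [hP, prod_apply]
    linear_combination
      -(-1 : ℤ) ^ (b + 1) * (∏ c ∈ range (l - 2), ((k' - b).choose (j c - b) : ℤ)) * h
  calc _ = (k'.choose i : ℤ) * ∑ b ∈ Icc 1 i, (-1) ^ (b + 1) * (i.choose b : ℤ) * P b := by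
        rw [sum_congr rfl hterm, mul_sum]
    _ ≤ k'.choose i * P 0 := mul_le_mul_of_nonneg_left hPcm.sum_Icc_le (by positivity)
    _ = _ := by simp [hP, prod_apply]

/-- For all integers `l ≥ 3`, `k' ≥ 1`, and `0 ≤ i ≤ j_a < k'` for every
`a ∈ {1, …, l−2}`, the inequality of integers
`C(k', i) · ∏_a C(k', j_a) ≥ ∑_{b=1}^{i} (−1)^{b+1} C(k', b) C(k'−b, i−b) ∏_c C(k'−b, j_c−b)`
holds. -/
theorem choose_prod_ge_alternating_sum
    (l k' i : ℕ) (j : ℕ → ℕ) (hl : 3 ≤ l) (hk : 1 ≤ k')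
    (hj : ∀ a ∈ Finset.range (l - 2), i ≤ j a ∧ j a < k') :
    ∑ b ∈ Finset.Icc 1 i,
        (-1 : ℤ) ^ (b + 1) * (k'.choose b : ℤ) * ((k' - b).choose (i - b) : ℤ) *
          ∏ c ∈ Finset.range (l - 2), ((k' - b).choose (j c - b) : ℤ)
      ≤ (k'.choose i : ℤ) * ∏ a ∈ Finset.range (l - 2), (k'.choose (j a) : ℤ) :=
  choose_prod_ge_alternating_sum_general l k' i j hj
end

section
/- For all natural numbers b, i, j_1, k with 1 ≤ b ≤ i ≤ j_1 < k, the following identity of rational numbers holds: (b / (k − b)) · C(k, b) · C(k − b, i − b) · C(k − b, j_1 − b) = (i / (k − j_1)) · C(k, i) · C(i − 1, b − 1) · C(k − b − 1, j_1 − b). -/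
/- Both sides equal `i · C(k,i) · C(i-1,b-1) · C(k-b-1,j₁-b) / (k-j₁)`:
`C(k,b) C(k-b,i-b) = C(k,i) C(i,b)` (choosing `b` inside `i` inside `k`),
`b C(i,b) = i C(i-1,b-1)`, and `(k-j₁) C(k-b,j₁-b) = (k-b) C(k-b-1,j₁-b)`. -/

theorem Nat.sub_mul_choose (m r : ℕ) : (m - r) * m.choose r = m * (m - 1).choose r := by
  obtain _ | n := m
  · simp
  · rw [Nat.add_sub_cancel, mul_comm, ← Nat.choose_mul_succ_eq, mul_comm]

/-- For all natural numbers `1 ≤ b ≤ i ≤ j₁ < k`, the identity of rational numbers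
`(b/(k−b)) C(k,b) C(k−b,i−b) C(k−b,j₁−b) = (i/(k−j₁)) C(k,i) C(i−1,b−1) C(k−b−1,j₁−b)`
holds. -/
theorem choose_fraction_identity
    (b i j₁ k : ℕ) (hb : 1 ≤ b) (hbi : b ≤ i) (hij : i ≤ j₁) (hjk : j₁ < k) :
    (b : ℚ) / ((k : ℚ) - (b : ℚ)) * (k.choose b : ℚ) * ((k - b).choose (i - b) : ℚ) *
        ((k - b).choose (j₁ - b) : ℚ)
      = (i : ℚ) / ((k : ℚ) - (j₁ : ℚ)) * (k.choose i : ℚ) * ((i - 1).choose (b - 1) : ℚ) *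
        ((k - b - 1).choose (j₁ - b) : ℚ) := by
  have nested : (k.choose b * (k - b).choose (i - b) : ℚ) = k.choose i * i.choose b := by
    exact_mod_cast (Nat.choose_mul hbi).symm
  have absorb : (b * i.choose b : ℚ) = i * (i - 1).choose (b - 1) := by
    have h := Nat.add_one_mul_choose_eq (i - 1) (b - 1)
    rw [Nat.sub_add_cancel (by omega), Nat.sub_add_cancel hb] at h
    rw [mul_comm]
    exact_mod_cast h.symm
  have lower : ((k : ℚ) - j₁) * (k - b).choose (j₁ - b)
      = ((k : ℚ) - b) * (k - b - 1).choose (j₁ - b) := by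
    have h := Nat.sub_mul_choose (k - b) (j₁ - b)
    rw [show k - b - (j₁ - b) = k - j₁ by omega] at h
    rw [← Nat.cast_sub hjk.le, ← Nat.cast_sub (by omega : b ≤ k)]
    exact_mod_cast h
  have hkb : (k : ℚ) - b ≠ 0 := sub_ne_zero.2 (by exact_mod_cast (by omega : k ≠ b))
  have hkj : (k : ℚ) - j₁ ≠ 0 := sub_ne_zero.2 (by exact_mod_cast hjk.ne')
  field_simp
  linear_combination (k.choose i : ℚ) * ((k : ℚ) - j₁) * (k - b).choose (j₁ - b) * absorb
    + ((k : ℚ) - j₁) * b * (k - b).choose (j₁ - b) * nested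
    + (k.choose i : ℚ) * i * (i - 1).choose (b - 1) * lower
end

section
/- Let l ≥ 3 and k ≥ 1 be integers and let i, j_1, …, j_{l−2} be integers with 0 ≤ i ≤ j_a < k for every a ∈ {1,…,l−2}. Then the following inequality of real numbers holds: Σ_{b=1}^{i} (−1)^{b+1} · (k/(k−b))^{l−2} · C(k, b) · C(k−b, i−b) · ∏_{c=1}^{l−2} C(k−b, j_c−b) ≥ Σ_{b=1}^{i} (−1)^{b+1} · C(k, b) · C(k−b, i−b) · ∏_{c=1}^{l−2} C(k−b, j_c−b). -/
/-!
Using `C(k, b) C(k - b, i - b) = C(k, i) C(i, b)` and dividing by `C(k, i)`, inclusion–exclusion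
over the common elements below `i` shows that the left side counts the tuples `(S_c)` of subsets
of `{0, …, k - 1}` with `|S_c| = j_c` whose intersection meets `{0, …, i - 1}`. Since
`k / (k - b) · C(k - b, j - b) = k / (k - j) · C(k - 1 - b, j - b)`, the right side is
`∏_c k / (k - j_c)` times the same count over `{0, …, k - 2}`. So the inequality says that the
proportion of such tuples does not increase when the ground set `{0, …, n - 1}` grows to
`{0, …, n}`. This follows from an injection: a tuple over `{0, …, n}` together with points
`t_c ∉ S_c` is sent, by swapping `n` and `t_c` in each `S_c`, to a tuple over `{0, …, n - 1}`
with the same elements below `n`, together with the points `t_c`.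
-/

open Finset

lemma map_swap_subset_range {S : Finset ℕ} {t n : ℕ} (hS : S ⊆ range (n + 1)) (ht : t ≤ n)
    (htS : t ∉ S) : S.map (Equiv.swap t n).toEmbedding ⊆ range n := by
  intro y hy
  rw [mem_map_equiv, Equiv.symm_swap] at hy
  have hyS := mem_range.1 (hS hy)
  rw [mem_range]
  rw [Equiv.swap_apply_def] at hy hyS
  split_ifs at hy hyS with h1 h2 <;> grind

lemma mem_map_swap_of_lt {S : Finset ℕ} {t n x : ℕ} (htS : t ∉ S) (hx : x ∈ S) (hxn : x < n) :
    x ∈ S.map (Equiv.swap t n).toEmbedding := by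
  rw [mem_map_equiv, Equiv.symm_swap,
    Equiv.swap_apply_of_ne_of_ne (ne_of_mem_of_not_mem hx htS) hxn.ne]
  exact hx

section Tuples

variable {ι : Type*} [Fintype ι] [DecidableEq ι]

def subsetTuples (n : ℕ) (j : ι → ℕ) : Finset (ι → Finset ℕ) :=
  Fintype.piFinset fun c => (range n).powersetCard (j c)

def subsetTuplesMeeting (n i : ℕ) (j : ι → ℕ) : Finset (ι → Finset ℕ) :=
  (subsetTuples n j).filter fun f => ∃ x < i, ∀ c, x ∈ f c

lemma card_filter_subsetTuples_superset {n : ℕ} {j : ι → ℕ} {B : Finset ℕ}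
    (hB : B ⊆ range n) (hBj : ∀ c, #B ≤ j c) :
    #((subsetTuples n j).filter fun f => ∀ c, B ⊆ f c) = ∏ c, (n - #B).choose (j c - #B) := by
  have : ((subsetTuples n j).filter fun f => ∀ c, B ⊆ f c) =
      Fintype.piFinset fun c => ((range n).powersetCard (j c)).filter (B ⊆ ·) := by
    ext f
    simp [subsetTuples, forall_and]
  rw [this, Fintype.card_piFinset]
  refine prod_congr rfl fun c _ => ?_
  rw [card_filter_powersetCard_subset _ _ _ hB (hBj c), card_range]

lemma card_filter_subsetTuples_not_meeting {n i : ℕ} {j : ι → ℕ} (hin : i ≤ n)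
    (hij : ∀ c, i ≤ j c) :
    (#((subsetTuples n j).filter fun f => ¬ ∃ x < i, ∀ c, x ∈ f c) : ℤ) =
      ∑ b ∈ range (i + 1), (-1) ^ b * (i.choose b : ℤ) * ∏ c, ((n - b).choose (j c - b) : ℤ) := by
  have indicator (f : ι → Finset ℕ) : (if ¬ ∃ x < i, ∀ c, x ∈ f c then 1 else 0 : ℤ) =
      ∑ B ∈ (range i).powerset, if ∀ c, B ⊆ f c then (-1) ^ #B else 0 := by
    have : (range i).powerset.filter (fun B => ∀ c, B ⊆ f c) =
        ((range i).filter fun x => ∀ c, x ∈ f c).powerset := by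
      ext B
      simp only [mem_filter, mem_powerset, subset_iff]
      grind
    rw [← sum_filter, this, sum_powerset_neg_one_pow_card]
    simp [filter_eq_empty_iff]
  calc (#((subsetTuples n j).filter fun f => ¬ ∃ x < i, ∀ c, x ∈ f c) : ℤ)
      = ∑ f ∈ subsetTuples n j, ∑ B ∈ (range i).powerset,
          if ∀ c, B ⊆ f c then (-1) ^ #B else 0 := by
        rw [card_filter, Nat.cast_sum]
        exact sum_congr rfl fun f _ => by rw [← indicator]; split_ifs <;> rfl
    _ = ∑ B ∈ (range i).powerset, (-1) ^ #B * ∏ c, ((n - #B).choose (j c - #B) : ℤ) := by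
        rw [sum_comm]
        refine sum_congr rfl fun B hB => ?_
        have hBi := card_le_card (mem_powerset.1 hB)
        rw [card_range] at hBi
        rw [← sum_filter, sum_const, card_filter_subsetTuples_superset
          ((mem_powerset.1 hB).trans (range_subset_range.2 hin)) fun c => hBi.trans (hij c)]
        rw [nsmul_eq_mul, Nat.cast_prod, mul_comm]
    _ = _ := by
        rw [sum_powerset_apply_card (fun b => (-1) ^ b * ∏ c, ((n - b).choose (j c - b) : ℤ)),
          card_range]
        exact sum_congr rfl fun b _ => by rw [nsmul_eq_mul]; ring

lemma card_subsetTuplesMeeting {n i : ℕ} {j : ι → ℕ} (hin : i ≤ n) (hij : ∀ c, i ≤ j c) :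
    (#(subsetTuplesMeeting n i j) : ℤ) =
      ∑ b ∈ Icc 1 i, (-1) ^ (b + 1) * (i.choose b : ℤ) * ∏ c, ((n - b).choose (j c - b) : ℤ) := by
  have hall : #(subsetTuples n j) = ∏ c, n.choose (j c) := by
    simp [subsetTuples, Fintype.card_piFinset]
  have hcompl : (#(subsetTuplesMeeting n i j) : ℤ) +
      #((subsetTuples n j).filter fun f => ¬ ∃ x < i, ∀ c, x ∈ f c) = ∏ c, (n.choose (j c) : ℤ) :=
    mod_cast (card_filter_add_card_filter_not _).trans hall
  have hnot := card_filter_subsetTuples_not_meeting hin hij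
  rw [range_eq_Ico, sum_eq_sum_Ico_succ_bot i.succ_pos, zero_add, Nat.succ_eq_add_one,
    Ico_add_one_right_eq_Icc] at hnot
  simp only [pow_zero, Nat.choose_zero_right, Nat.sub_zero, Nat.cast_one, one_mul] at hnot
  simp only [pow_succ, mul_neg_one, neg_mul, sum_neg_distrib]
  linarith

lemma prod_sub_mul_card_subsetTuplesMeeting_succ_le {n i : ℕ} {j : ι → ℕ} (hin : i ≤ n) :
    (∏ c, (n + 1 - j c)) * #(subsetTuplesMeeting (n + 1) i j) ≤
      (n + 1) ^ Fintype.card ι * #(subsetTuplesMeeting n i j) := by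
  calc (∏ c, (n + 1 - j c)) * #(subsetTuplesMeeting (n + 1) i j)
      = #((subsetTuplesMeeting (n + 1) i j).sigma
          fun f => Fintype.piFinset fun c => range (n + 1) \ f c) := by
        rw [card_sigma, mul_comm, ← smul_eq_mul, ← sum_const]
        refine sum_congr rfl fun f hf => ?_
        simp only [subsetTuplesMeeting, subsetTuples, mem_filter, Fintype.mem_piFinset,
          mem_powersetCard] at hf
        rw [Fintype.card_piFinset]
        exact prod_congr rfl fun c _ => by
          rw [card_sdiff_of_subset (hf.1 c).1, card_range, (hf.1 c).2]
    _ ≤ #(subsetTuplesMeeting n i j ×ˢ Fintype.piFinset fun _ : ι => range (n + 1)) := by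
        refine card_le_card_of_injOn
          (fun p => (fun c => (p.1 c).map (Equiv.swap (p.2 c) n).toEmbedding, p.2)) ?_ ?_
        · rintro ⟨f, t⟩ hft
          simp only [mem_coe, mem_sigma, subsetTuplesMeeting, subsetTuples, mem_filter,
            Fintype.mem_piFinset, mem_powersetCard, mem_sdiff, mem_range] at hft
          obtain ⟨⟨hf, x, hxi, hx⟩, ht⟩ := hft
          simp only [mem_coe, mem_product, subsetTuplesMeeting, subsetTuples, mem_filter,
            Fintype.mem_piFinset, mem_powersetCard, card_map, mem_range]
          refine ⟨⟨fun c => ⟨?_, (hf c).2⟩, x, hxi, fun c => ?_⟩, fun c => (ht c).1⟩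
          · exact map_swap_subset_range (hf c).1 (Nat.le_of_lt_succ (ht c).1) (ht c).2
          · exact mem_map_swap_of_lt (ht c).2 (hx c) (by omega)
        · rintro ⟨f, t⟩ - ⟨g, s⟩ - h
          simp only [Prod.mk.injEq] at h
          obtain ⟨hfg, rfl⟩ := h
          have : f = g := funext fun c => map_inj.1 (congrFun hfg c)
          rw [this]
    _ = (n + 1) ^ Fintype.card ι * #(subsetTuplesMeeting n i j) := by
        rw [card_product, Fintype.card_piFinset, prod_const, card_range, card_univ, mul_comm]

lemma card_subsetTuplesMeeting_succ_le {n i : ℕ} {j : ι → ℕ} (hin : i ≤ n) (hjn : ∀ c, j c ≤ n) :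
    (#(subsetTuplesMeeting (n + 1) i j) : ℝ) ≤
      (∏ c, ((n + 1 : ℝ) / (n + 1 - j c))) * #(subsetTuplesMeeting n i j) := by
  have hpos : 0 < ∏ c, ((n + 1 : ℝ) - j c) :=
    prod_pos fun c _ => by have : (j c : ℝ) ≤ n := mod_cast hjn c; linarith
  have hle : (∏ c, ((n + 1 : ℝ) - j c)) * #(subsetTuplesMeeting (n + 1) i j) ≤
      (n + 1) ^ Fintype.card ι * #(subsetTuplesMeeting n i j) := by
    have hcast (c : ι) : ((n + 1 - j c : ℕ) : ℝ) = n + 1 - j c := by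
      rw [Nat.cast_sub (by have := hjn c; omega)]; push_cast; ring
    have h := (Nat.cast_le (α := ℝ)).2 (prod_sub_mul_card_subsetTuplesMeeting_succ_le (j := j) hin)
    simpa only [Nat.cast_mul, Nat.cast_prod, hcast, Nat.cast_pow, Nat.cast_add, Nat.cast_one]
      using h
  rw [prod_div_distrib, prod_const, card_univ, div_mul_eq_mul_div, le_div_iff₀ hpos]
  linarith

end Tuples

lemma succ_div_mul_choose_eq {n b r : ℕ} (hbr : b ≤ r) (hrn : r ≤ n) :
    (n + 1 : ℝ) / (n + 1 - b) * ((n + 1 - b).choose (r - b) : ℝ) =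
      (n + 1 : ℝ) / (n + 1 - r) * ((n - b).choose (r - b) : ℝ) := by
  have hnat := Nat.choose_mul_succ_eq (n - b) (r - b)
  rw [show n - b + 1 = n + 1 - b by omega, show n + 1 - b - (r - b) = n + 1 - r by omega] at hnat
  have hreal : ((n - b).choose (r - b) : ℝ) * (n + 1 - b) =
      ((n + 1 - b).choose (r - b) : ℝ) * (n + 1 - r) := by
    have := congrArg (Nat.cast : ℕ → ℝ) hnat
    push_cast [Nat.cast_sub (show b ≤ n + 1 by omega), Nat.cast_sub (show r ≤ n + 1 by omega)]
      at this
    exact this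
  have hb : (n + 1 : ℝ) - b ≠ 0 := by
    have : (b : ℝ) ≤ n := by exact_mod_cast hbr.trans hrn
    linarith
  have hr : (n + 1 : ℝ) - r ≠ 0 := by
    have : (r : ℝ) ≤ n := by exact_mod_cast hrn
    linarith
  field_simp
  linear_combination -hreal

section

variable {ι : Type*} [Fintype ι]

lemma div_pow_mul_prod_choose_eq {n b : ℕ} {j : ι → ℕ} (hbj : ∀ c, b ≤ j c ∧ j c ≤ n) :
    ((n + 1 : ℝ) / (n + 1 - b)) ^ Fintype.card ι * ∏ c, ((n + 1 - b).choose (j c - b) : ℝ) =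
      (∏ c, ((n + 1 : ℝ) / (n + 1 - j c))) * ∏ c, ((n - b).choose (j c - b) : ℝ) := by
  rw [← card_univ, ← prod_const, ← prod_mul_distrib, ← prod_mul_distrib]
  exact prod_congr rfl fun c _ => succ_div_mul_choose_eq (hbj c).1 (hbj c).2

theorem alternating_sum_choose_le_alternating_sum_div_pow [Nonempty ι] {k i : ℕ} {j : ι → ℕ}
    (hj : ∀ c, i ≤ j c ∧ j c < k) :
    ∑ b ∈ Icc 1 i, (-1 : ℝ) ^ (b + 1) * (k.choose b : ℝ) * ((k - b).choose (i - b) : ℝ) *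
        ∏ c, ((k - b).choose (j c - b) : ℝ) ≤
      ∑ b ∈ Icc 1 i, (-1 : ℝ) ^ (b + 1) * ((k : ℝ) / ((k : ℝ) - (b : ℝ))) ^ Fintype.card ι *
        (k.choose b : ℝ) * ((k - b).choose (i - b) : ℝ) * ∏ c, ((k - b).choose (j c - b) : ℝ) := by
  classical
  obtain ⟨c₀⟩ := ‹Nonempty ι›
  obtain ⟨n, rfl⟩ : ∃ n, k = n + 1 := ⟨k - 1, by have := hj c₀; omega⟩
  have hin : i ≤ n := by have := hj c₀; omega
  have hjn (c : ι) : i ≤ j c ∧ j c ≤ n := ⟨(hj c).1, Nat.le_of_lt_succ (hj c).2⟩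
  have hchoose {b : ℕ} (hb : b ∈ Icc 1 i) :
      ((n + 1).choose b : ℝ) * ((n + 1 - b).choose (i - b) : ℝ) =
        ((n + 1).choose i : ℝ) * (i.choose b : ℝ) := by
    exact_mod_cast (Nat.choose_mul (mem_Icc.1 hb).2).symm
  have hcard (m : ℕ) (hm : i ≤ m) : (#(subsetTuplesMeeting m i j) : ℝ) =
      ∑ b ∈ Icc 1 i, (-1) ^ (b + 1) * (i.choose b : ℝ) * ∏ c, ((m - b).choose (j c - b) : ℝ) := by
    exact_mod_cast card_subsetTuplesMeeting hm fun c => (hj c).1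
  calc _ = ((n + 1).choose i : ℝ) * #(subsetTuplesMeeting (n + 1) i j) := by
        rw [hcard (n + 1) (by omega), mul_sum]
        refine sum_congr rfl fun b hb => ?_
        rw [mul_assoc _ _ ((n + 1 - b).choose (i - b) : ℝ), hchoose hb]
        ring
    _ ≤ ((n + 1).choose i : ℝ) *
          ((∏ c, ((n + 1 : ℝ) / (n + 1 - j c))) * #(subsetTuplesMeeting n i j)) := by
        gcongr
        exact card_subsetTuplesMeeting_succ_le hin fun c => (hjn c).2
    _ = _ := by
        rw [hcard _ hin, mul_sum, mul_sum]
        refine sum_congr rfl fun b hb => ?_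
        have hbj (c : ι) : b ≤ j c ∧ j c ≤ n := ⟨(mem_Icc.1 hb).2.trans (hjn c).1, (hjn c).2⟩
        push_cast
        linear_combination
          (-(-1) ^ (b + 1) * ((n + 1).choose i : ℝ) * (i.choose b : ℝ)) *
              div_pow_mul_prod_choose_eq hbj -
            ((-1) ^ (b + 1) * ((n + 1 : ℝ) / (n + 1 - b)) ^ Fintype.card ι *
              ∏ c, ((n + 1 - b).choose (j c - b) : ℝ)) * hchoose hb

end

theorem alternating_sum_ratio_ge_general
    (l k i : ℕ) (j : ℕ → ℕ) (hl : 3 ≤ l)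
    (hj : ∀ a ∈ Finset.range (l - 2), i ≤ j a ∧ j a < k) :
    ∑ b ∈ Finset.Icc 1 i,
        (-1 : ℝ) ^ (b + 1) * (k.choose b : ℝ) * ((k - b).choose (i - b) : ℝ) *
          ∏ c ∈ Finset.range (l - 2), ((k - b).choose (j c - b) : ℝ)
      ≤ ∑ b ∈ Finset.Icc 1 i,
          (-1 : ℝ) ^ (b + 1) * ((k : ℝ) / ((k : ℝ) - (b : ℝ))) ^ (l - 2) *
            (k.choose b : ℝ) * ((k - b).choose (i - b) : ℝ) *
            ∏ c ∈ Finset.range (l - 2), ((k - b).choose (j c - b) : ℝ) := by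
  have : Nonempty (Fin (l - 2)) := ⟨⟨0, by omega⟩⟩
  have hprod (b : ℕ) : ∏ c : Fin (l - 2), ((k - b).choose (j c - b) : ℝ) =
      ∏ c ∈ range (l - 2), ((k - b).choose (j c - b) : ℝ) :=
    Fin.prod_univ_eq_prod_range (fun c => ((k - b).choose (j c - b) : ℝ)) _
  simpa only [hprod, Fintype.card_fin] using
    alternating_sum_choose_le_alternating_sum_div_pow (j := fun c : Fin (l - 2) => j c)
      fun c => hj c (mem_range.2 c.2)

/-- For integers `l ≥ 3`, `k ≥ 1`, and `0 ≤ i ≤ j_a < k` for every `a ∈ {1, …, l−2}`,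
the inequality of real numbers
`∑_{b=1}^{i} (−1)^{b+1} (k/(k−b))^{l−2} C(k,b) C(k−b,i−b) ∏_c C(k−b,j_c−b)
  ≥ ∑_{b=1}^{i} (−1)^{b+1} C(k,b) C(k−b,i−b) ∏_c C(k−b,j_c−b)` holds. -/
theorem alternating_sum_ratio_ge
    (l k i : ℕ) (j : ℕ → ℕ) (hl : 3 ≤ l) (hk : 1 ≤ k)
    (hj : ∀ a ∈ Finset.range (l - 2), i ≤ j a ∧ j a < k) :
    ∑ b ∈ Finset.Icc 1 i,
        (-1 : ℝ) ^ (b + 1) * (k.choose b : ℝ) * ((k - b).choose (i - b) : ℝ) *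
          ∏ c ∈ Finset.range (l - 2), ((k - b).choose (j c - b) : ℝ)
      ≤ ∑ b ∈ Finset.Icc 1 i,
          (-1 : ℝ) ^ (b + 1) * ((k : ℝ) / ((k : ℝ) - (b : ℝ))) ^ (l - 2) *
            (k.choose b : ℝ) * ((k - b).choose (i - b) : ℝ) *
            ∏ c ∈ Finset.range (l - 2), ((k - b).choose (j c - b) : ℝ) :=
  alternating_sum_ratio_ge_general l k i j hl hj
end

section
/- Strict positivity of the expected belief in the true label: let k ≥ 1 and l ≥ 3 be integers and let p_1, p_2 ∈ (0, 1) be real numbers. Define E(k, l, p_1, p_2) = Σ_{h=0}^{k−1} Σ_{i=0}^{k−h−1} Σ_{(j_1,…,j_{l−2}) ∈ {0,…,k−h−1}^{l−2}} [ C(k, k−h) · ( C(k−h, i) · ∏_{a=1}^{l−2} C(k−h, j_a) − Σ_{b=1}^{min(i, j_1, …, j_{l−2})} (−1)^{b+1} · C(k−h, b) · C(k−h−b, i−b) · ∏_{c=1}^{l−2} C(k−h−b, j_c−b) ) ] · 2^{−k} · (p_1/(2^{l−2}−1))^{i} · (p_2/2^{l−2})^{k−h−i}. Then E(k, l, p_1,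 p_2) > 0. -/
/-!
The bracket of each summand equals, by inclusion–exclusion over the common elements, the number of
tuples `(A, B₁, …, Bₗ₋₂)` of subsets of a `(k - h)`-set with prescribed sizes `i, j₁, …, jₗ₋₂` and
`A ∩ B₁ ∩ ⋯ ∩ Bₗ₋₂ = ∅`. Hence every summand is nonnegative, and the summand with `h = k - 1`,
`i = 0`, `j = 0` equals `k · 2⁻ᵏ · p₂ / 2^(l-2) > 0`.
-/

/-- Closed-form expression for the conditional expected belief
`E[bel^{m̂}({ỹ}) | X = x̃]` in the hidden true label `ỹ` of an instance with `k`
neighbors, under the label-noise model of Assumption 1 with weights `p₁, p₂`. -/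
noncomputable def expectedBeliefTrue (k l : ℕ) (p₁ p₂ : ℝ) : ℝ :=
  ∑ h ∈ Finset.range k, ∑ i ∈ Finset.range (k - h),
    ∑ j ∈ Fintype.piFinset (fun _ : Fin (l - 2) => Finset.range (k - h)),
      (k.choose (k - h) : ℝ) *
        (((k - h).choose i : ℝ) * (∏ a, ((k - h).choose (j a) : ℝ)) -
          ∑ b ∈ Finset.Icc 1 (Finset.fold min i j Finset.univ),
            (-1 : ℝ) ^ (b + 1) * ((k - h).choose b : ℝ) *
              ((k - h - b).choose (i - b) : ℝ) *
              ∏ c, ((k - h - b).choose (j c - b) : ℝ)) *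
        ((2 : ℝ) ^ k)⁻¹ * (p₁ / ((2 : ℝ) ^ (l - 2) - 1)) ^ i *
        (p₂ / (2 : ℝ) ^ (l - 2)) ^ (k - h - i)

open Finset

section InclusionExclusion

variable {α ι : Type*} [DecidableEq α] [Fintype α] [Fintype ι] [DecidableEq ι]

theorem card_filter_inf_eq_empty_eq_sum_powerset (P : ι → Finset (Finset α)) :
    (#{B ∈ Fintype.piFinset P | univ.inf B = ∅} : ℤ) =
      ∑ T : Finset α, (-1) ^ #T * ∏ c, (#{A ∈ P c | T ⊆ A} : ℤ) := by
  have hprod (T : Finset α) : ∏ c, (#{A ∈ P c | T ⊆ A} : ℤ) =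
      ∑ B ∈ Fintype.piFinset P, if T ⊆ univ.inf B then 1 else 0 := by
    simp only [card_filter, Nat.cast_sum, Nat.cast_ite, Nat.cast_one, Nat.cast_zero]
    rw [prod_univ_sum]
    refine sum_congr rfl fun B _ ↦ ?_
    simp [Fintype.prod_boole, Finset.le_inf_iff]
  simp only [hprod, mul_sum, mul_ite, mul_one, mul_zero]
  rw [sum_comm, card_filter, Nat.cast_sum]
  refine sum_congr rfl fun B _ ↦ ?_
  rw [← sum_filter, filter_subset_univ, sum_powerset_neg_one_pow_card]
  simp

theorem card_filter_superset_powersetCard (T : Finset α) (r : ℕ) :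
    #{A ∈ (univ : Finset α).powersetCard r | T ⊆ A} =
      if #T ≤ r then (Fintype.card α - #T).choose (r - #T) else 0 := by
  split_ifs with hr
  · exact card_filter_powersetCard_subset T univ r (subset_univ T) hr
  · rw [card_eq_zero, filter_eq_empty_iff]
    exact fun A hA hTA ↦ hr ((card_le_card hTA).trans_eq (mem_powersetCard.1 hA).2)

theorem card_filter_inf_eq_empty_piFinset_powersetCard (j : ι → ℕ) :
    (#{B ∈ Fintype.piFinset fun c ↦ (univ : Finset α).powersetCard (j c) | univ.inf B = ∅} : ℤ) =
      ∑ b ∈ range (Fintype.card α + 1), (-1) ^ b * (Fintype.card α).choose b *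
        ∏ c, if b ≤ j c then ((Fintype.card α - b).choose (j c - b) : ℤ) else 0 := by
  simp only [card_filter_inf_eq_empty_eq_sum_powerset, card_filter_superset_powersetCard,
    Nat.cast_ite, Nat.cast_zero]
  rw [← powerset_univ, sum_powerset_apply_card (fun b ↦ (-1 : ℤ) ^ b *
    ∏ c, if b ≤ j c then ((Fintype.card α - b).choose (j c - b) : ℤ) else 0), card_univ]
  simp only [nsmul_eq_mul]
  exact sum_congr rfl fun b _ ↦ by ring

end InclusionExclusion

noncomputable def emptyInterCount {m : ℕ} (n i : ℕ) (j : Fin m → ℕ) : ℝ :=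
  (n.choose i : ℝ) * (∏ a, (n.choose (j a) : ℝ)) -
    ∑ b ∈ Icc 1 (Finset.fold min i j univ),
      (-1 : ℝ) ^ (b + 1) * (n.choose b : ℝ) * ((n - b).choose (i - b) : ℝ) *
        ∏ c, ((n - b).choose (j c - b) : ℝ)

theorem emptyInterCount_zero_left {m : ℕ} (n : ℕ) (j : Fin m → ℕ) :
    emptyInterCount n 0 j = ∏ a, (n.choose (j a) : ℝ) := by
  have hM : fold min 0 j univ = 0 := Nat.le_zero.1 ((fold_min_le _).2 (Or.inl le_rfl))
  simp [emptyInterCount, hM]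

theorem emptyInterCount_eq_sum_range {m : ℕ} (n i : ℕ) (j : Fin m → ℕ) :
    emptyInterCount n i j = ∑ b ∈ range (fold min i j univ + 1),
      (-1 : ℝ) ^ b * n.choose b * ((n - b).choose (i - b) * ∏ c, ((n - b).choose (j c - b) : ℝ)) := by
  rw [emptyInterCount, range_eq_Ico, sum_eq_sum_Ico_succ_bot (Nat.succ_pos _), Nat.succ_eq_add_one,
    zero_add, Ico_add_one_right_eq_Icc, sub_eq_add_neg, ← sum_neg_distrib]
  simp only [pow_zero, one_mul, Nat.choose_zero_right, Nat.cast_one, Nat.sub_zero]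
  congr 1
  exact sum_congr rfl fun b _ ↦ by ring

theorem emptyInterCount_eq_card {m n i : ℕ} (j : Fin m → ℕ) (hi : i ≤ n) :
    emptyInterCount n i j = #{B ∈ Fintype.piFinset fun c ↦
      (univ : Finset (Fin n)).powersetCard ((Fin.cons i j : Fin (m + 1) → ℕ) c) | univ.inf B = ∅} := by
  have hle (b : ℕ) : b ≤ fold min i j univ ↔ b ≤ i ∧ ∀ c, b ≤ j c := by simp [le_fold_min]
  rw [← Int.cast_natCast, card_filter_inf_eq_empty_piFinset_powersetCard,
    emptyInterCount_eq_sum_range]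
  simp only [Fintype.card_fin, Fin.prod_univ_succ, Fin.cons_zero, Fin.cons_succ]
  push_cast
  refine sum_subset_zero_on_sdiff ?_ (fun b hb ↦ ?_) (fun b hb ↦ ?_)
  · exact range_subset_range.2 (by have := ((hle _).1 le_rfl).1; omega)
  · have hb : ¬ (b ≤ i ∧ ∀ c, b ≤ j c) := by
      rw [← hle]; simp only [mem_sdiff, mem_range] at hb; omega
    rw [not_and_or, not_forall] at hb
    rcases hb with hbi | ⟨c, hbc⟩
    · simp [hbi]
    · rw [prod_eq_zero (mem_univ c) (if_neg hbc)]
      simp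
  · obtain ⟨hbi, hbj⟩ := (hle b).1 (Nat.lt_succ_iff.1 (mem_range.1 hb))
    simp [hbi, hbj]

theorem emptyInterCount_nonneg {m n i : ℕ} (j : Fin m → ℕ) (hi : i ≤ n) :
    0 ≤ emptyInterCount n i j := by
  rw [emptyInterCount_eq_card j hi]
  positivity

theorem expectedBeliefTrue_eq (k l : ℕ) (p₁ p₂ : ℝ) :
    expectedBeliefTrue k l p₁ p₂ =
      ∑ h ∈ range k, ∑ i ∈ range (k - h),
        ∑ j ∈ Fintype.piFinset (fun _ : Fin (l - 2) => range (k - h)),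
          (k.choose (k - h) : ℝ) * emptyInterCount (k - h) i j * ((2 : ℝ) ^ k)⁻¹ *
            (p₁ / ((2 : ℝ) ^ (l - 2) - 1)) ^ i * (p₂ / (2 : ℝ) ^ (l - 2)) ^ (k - h - i) :=
  rfl

theorem expectedBeliefTrue_pos_general (k l : ℕ) (p₁ p₂ : ℝ)
    (hk : 1 ≤ k)
    (hp₁ : p₁ ∈ Set.Ioo (0 : ℝ) 1) (hp₂ : p₂ ∈ Set.Ioo (0 : ℝ) 1) :
    0 < expectedBeliefTrue k l p₁ p₂ := by
  obtain ⟨n, rfl⟩ : ∃ n, k = n + 1 := ⟨k - 1, by omega⟩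
  have hq₁ : 0 ≤ p₁ / ((2 : ℝ) ^ (l - 2) - 1) :=
    div_nonneg hp₁.1.le (sub_nonneg.2 (one_le_pow₀ one_le_two))
  have hq₂ : 0 < p₂ / (2 : ℝ) ^ (l - 2) := div_pos hp₂.1 (by positivity)
  have hsummand : ∀ h, ∀ i ∈ range (n + 1 - h), ∀ j : Fin (l - 2) → ℕ,
      0 ≤ ((n + 1).choose (n + 1 - h) : ℝ) * emptyInterCount (n + 1 - h) i j *
        ((2 : ℝ) ^ (n + 1))⁻¹ * (p₁ / ((2 : ℝ) ^ (l - 2) - 1)) ^ i *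
          (p₂ / (2 : ℝ) ^ (l - 2)) ^ (n + 1 - h - i) := fun h i hi j ↦ by
    have := emptyInterCount_nonneg j (mem_range.1 hi).le
    positivity
  rw [expectedBeliefTrue_eq]
  refine sum_pos' (fun h _ ↦ sum_nonneg fun i hi ↦ sum_nonneg fun j _ ↦ hsummand h i hi j)
    ⟨n, self_mem_range_succ n, ?_⟩
  refine sum_pos' (fun i hi ↦ sum_nonneg fun j _ ↦ hsummand n i hi j)
    ⟨0, by simp, ?_⟩
  refine sum_pos' (fun j _ ↦ hsummand n 0 (by simp) j)
    ⟨fun _ ↦ 0, by simp, ?_⟩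
  simp only [Nat.add_sub_cancel_left, emptyInterCount_zero_left, Nat.choose_zero_right,
    Nat.choose_one_right, Nat.cast_one, prod_const_one, pow_zero, Nat.sub_zero, pow_one, mul_one]
  exact mul_pos (by positivity) hq₂

/-- Strict positivity of the expected belief in the true label: for `k ≥ 1`, `l ≥ 3`, and
`p₁, p₂ ∈ (0, 1)`, we have `E(k, l, p₁, p₂) > 0`. -/
theorem expectedBeliefTrue_pos (k l : ℕ) (p₁ p₂ : ℝ)
    (hk : 1 ≤ k) (hl : 3 ≤ l)
    (hp₁ : p₁ ∈ Set.Ioo (0 : ℝ) 1) (hp₂ : p₂ ∈ Set.Ioo (0 : ℝ) 1) :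
    0 < expectedBeliefTrue k l p₁ p₂ :=
  expectedBeliefTrue_pos_general k l p₁ p₂ hk hp₁ hp₂
end

section
/- Dominance of the true label's expected belief: let k ≥ 1 and l ≥ 3 be integers and let p_1, p_2, p_3 ∈ (0, 1) be real numbers with p_1 + p_2 + p_3 = 1 and p_1 ≥ p_2 ≥ p_3 > 0. Define E(k, l, p_1, p_2) = Σ_{h=0}^{k−1} Σ_{i=0}^{k−h−1} Σ_{(j_1,…,j_{l−2}) ∈ {0,…,k−h−1}^{l−2}} [ C(k, k−h) · ( C(k−h, i) · ∏_{a=1}^{l−2} C(k−h, j_a) − Σ_{b=1}^{min(i, j_1, …, j_{l−2})} (−1)^{b+1} · C(k−h, b) · C(k−h−b, i−b) · ∏_{c=1}^{l−2} C(k−h−b, j_c−b) ) ] · 2^{−k} · (p_1/(2^{l−2}−1))^{i} · (p_2/2^{l−2})^{k−h−i}, and define F(k, l, p_1, p_3) by the same expression with the summation variable i renamed to t and the final factor (p_2/2^{l−2})^{k−h−i} replaced by (p_3/(2^{l−1}−1))^{k−h−t}. Then E(k, l, p_1, p_2) > F(k, l, p_1, p_3). -/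
/-- Closed-form expression for the conditional expected belief
`E[bel^{m̂}({ỹ_c}) | X = x̃]` in the class label `ỹ_c` that cooccurs most frequently with
the true label, under the label-noise model of Assumption 1 with weights `p₁, p₃`: the
same expression as `expectedBeliefTrue` with the summation variable `i` renamed to `t`
and the final factor replaced by `(p₃ / (2^{l−1} − 1))^{k−h−t}`. -/
noncomputable def expectedBeliefCooccur (k l : ℕ) (p₁ p₃ : ℝ) : ℝ :=
  ∑ h ∈ Finset.range k, ∑ t ∈ Finset.range (k - h),
    ∑ j ∈ Fintype.piFinset (fun _ : Fin (l - 2) => Finset.range (k - h)),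
      (k.choose (k - h) : ℝ) *
        (((k - h).choose t : ℝ) * (∏ a, ((k - h).choose (j a) : ℝ)) -
          ∑ b ∈ Finset.Icc 1 (Finset.fold min t j Finset.univ),
            (-1 : ℝ) ^ (b + 1) * ((k - h).choose b : ℝ) *
              ((k - h - b).choose (t - b) : ℝ) *
              ∏ c, ((k - h - b).choose (j c - b) : ℝ)) *
        ((2 : ℝ) ^ k)⁻¹ * (p₁ / ((2 : ℝ) ^ (l - 2) - 1)) ^ t *
        (p₃ / ((2 : ℝ) ^ (l - 1) - 1)) ^ (k - h - t)

/-!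
Both closed forms are values of one polynomial `beliefSum k (l - 2) x y`, at
`x = p₁ / (2^(l-2) - 1)` and at `y = p₂ / 2^(l-2)`, resp. `y = p₃ / (2^(l-1) - 1)`.
By inclusion–exclusion each bracket counts the tuples of subsets of a `(k - h)`-set, of sizes
`i, j₁, …, j_(l-2)`, with empty common intersection, so every coefficient is nonnegative, and the
coefficient of `y` itself (from `h = k - 1`) is `k / 2^k > 0`. Hence the polynomial is strictly
increasing in `y ≥ 0`, and `p₃ / (2^(l-1) - 1) < p₂ / 2^(l-2)` because `2^(l-1) - 1 > 2^(l-2)`.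
-/

open Finset

theorem Finset.card_filter_powersetCard_superset {α : Type*} [DecidableEq α]
    {u T : Finset α} {s : ℕ} (hT : T ⊆ u) (hs : s ≤ #u) :
    #{A ∈ u.powersetCard s | T ⊆ A} = (#u - #T).choose (#u - s) := by
  by_cases hTs : #T ≤ s
  · rw [card_filter_powersetCard_subset T u s hT hTs]
    exact Nat.choose_symm_of_eq_add (by omega)
  · have := card_le_card hT
    rw [Nat.choose_eq_zero_of_lt (by omega), card_eq_zero, filter_eq_empty_iff]
    exact fun A hA hTA => hTs ((mem_powersetCard.1 hA).2 ▸ card_le_card hTA)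

theorem card_filter_piFinset_powersetCard_inf_eq_empty {ι : Type*} [Fintype ι] [DecidableEq ι]
    (m : ℕ) (s : ι → ℕ) (hs : ∀ a, s a ≤ m) :
    (#{S ∈ Fintype.piFinset fun a => (univ : Finset (Fin m)).powersetCard (s a) |
        univ.inf S = ∅} : ℤ) =
      ∑ b ∈ range (m + 1), (-1) ^ b * m.choose b * ∏ a, ((m - b).choose (m - s a) : ℤ) := by
  set X := Fintype.piFinset fun a => (univ : Finset (Fin m)).powersetCard (s a)
  have card_superset (T : Finset (Fin m)) :
      #{S ∈ X | T ⊆ univ.inf S} = ∏ a, (m - #T).choose (m - s a) := by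
    have : {S ∈ X | T ⊆ univ.inf S} =
        Fintype.piFinset fun a => {A ∈ (univ : Finset (Fin m)).powersetCard (s a) | T ⊆ A} := by
      ext S
      simp [X, Finset.le_inf_iff, forall_and]
    rw [this, Fintype.card_piFinset]
    refine prod_congr rfl fun a _ => ?_
    simpa using card_filter_powersetCard_superset (subset_univ T) (by simpa using hs a)
  calc (#{S ∈ X | univ.inf S = ∅} : ℤ)
      = ∑ S ∈ X, ∑ T ∈ (univ.inf S).powerset, (-1 : ℤ) ^ #T := by
        simp_rw [sum_powerset_neg_one_pow_card, sum_boole]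
    _ = ∑ T ∈ (univ : Finset (Fin m)).powerset,
          (-1 : ℤ) ^ #T * #{S ∈ X | T ⊆ univ.inf S} := by
        rw [sum_comm' (t' := univ.powerset) (s' := fun T => {S ∈ X | T ⊆ univ.inf S})
          (fun S T => by simp [and_comm])]
        simp [mul_comm]
    _ = ∑ b ∈ range (m + 1), (-1) ^ b * m.choose b * ∏ a, ((m - b).choose (m - s a) : ℤ) := by
        simp_rw [card_superset]
        push_cast
        rw [sum_powerset_apply_card (fun b => (-1) ^ b * ∏ a, ((m - b).choose (m - s a) : ℤ))]
        simp [mul_assoc, mul_left_comm]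

noncomputable def inclusionExclusionBracket (m i : ℕ) {n : ℕ} (j : Fin n → ℕ) : ℝ :=
  (m.choose i : ℝ) * (∏ a, (m.choose (j a) : ℝ)) -
    ∑ b ∈ Icc 1 (fold min i j univ),
      (-1 : ℝ) ^ (b + 1) * (m.choose b : ℝ) * ((m - b).choose (i - b) : ℝ) *
        ∏ c, ((m - b).choose (j c - b) : ℝ)

theorem inclusionExclusionBracket_eq_card {m i n : ℕ} {j : Fin n → ℕ} (hi : i ≤ m)
    (hj : ∀ a, j a ≤ m) :
    inclusionExclusionBracket m i j =
      #{S ∈ Fintype.piFinset fun a =>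
          (univ : Finset (Fin m)).powersetCard ((Fin.cons i j : Fin (n + 1) → ℕ) a) |
        univ.inf S = ∅} := by
  set M := fold min i j univ
  have hs (a : Fin (n + 1)) : (Fin.cons i j : Fin (n + 1) → ℕ) a ≤ m := Fin.cases hi hj a
  have le_M (a : Fin (n + 1)) : M ≤ (Fin.cons i j : Fin (n + 1) → ℕ) a :=
    Fin.cases ((fold_min_le _).2 (.inl le_rfl))
      (fun c => (fold_min_le _).2 (.inr ⟨c, mem_univ c, le_rfl⟩)) a
  obtain ⟨a₀, ha₀⟩ : ∃ a, (Fin.cons i j : Fin (n + 1) → ℕ) a ≤ M := by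
    by_contra! h
    have : M + 1 ≤ M := (le_fold_min _).2 ⟨h 0, fun c _ => h c.succ⟩
    omega
  have hcard :=
    congrArg (Int.cast : ℤ → ℝ) (card_filter_piFinset_powersetCard_inf_eq_empty m _ hs)
  push_cast at hcard
  have hMm := (le_M a₀).trans (hs a₀)
  rw [hcard, ← sum_subset (range_subset_range.2 (by omega : M + 1 ≤ m + 1))]
  · have hrange : range (M + 1) = insert 0 (Icc 1 M) := by
      ext b; simp; omega
    rw [hrange, sum_insert (by simp), inclusionExclusionBracket, sub_eq_add_neg,
      ← sum_neg_distrib]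
    congr 1
    · simp [Fin.prod_univ_succ, Nat.choose_symm hi, Nat.choose_symm (hj _)]
    · refine sum_congr rfl fun b hb => ?_
      have hbM := (mem_Icc.1 hb).2
      have choose_sub {x : ℕ} (hx : x ≤ m) (hbx : b ≤ x) :
          (m - b).choose (m - x) = (m - b).choose (x - b) :=
        Nat.choose_symm_of_eq_add (by omega)
      simp only [Fin.prod_univ_succ, Fin.cons_zero, Fin.cons_succ,
        choose_sub hi (hbM.trans (le_M 0)),
        fun c => choose_sub (hj c) (hbM.trans (le_M c.succ))]
      ring
  · intro b hb hbM
    simp only [mem_range] at hb hbM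
    rw [prod_eq_zero (mem_univ a₀)
      (by rw [Nat.choose_eq_zero_of_lt (by omega), Nat.cast_zero])]
    ring

theorem inclusionExclusionBracket_nonneg {m i n : ℕ} {j : Fin n → ℕ} (hi : i ≤ m)
    (hj : ∀ a, j a ≤ m) : 0 ≤ inclusionExclusionBracket m i j := by
  rw [inclusionExclusionBracket_eq_card hi hj]
  positivity

theorem inclusionExclusionBracket_zero {m n : ℕ} :
    inclusionExclusionBracket m 0 (fun _ : Fin n => 0) = 1 := by
  have : fold min 0 (fun _ : Fin n => 0) univ = 0 :=
    Nat.le_zero.1 ((fold_min_le _).2 (.inl le_rfl))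
  simp [inclusionExclusionBracket, this]

noncomputable def beliefSum (k n : ℕ) (x y : ℝ) : ℝ :=
  ∑ h ∈ range k, ∑ i ∈ range (k - h), ∑ j ∈ Fintype.piFinset fun _ : Fin n => range (k - h),
    (k.choose (k - h) : ℝ) * inclusionExclusionBracket (k - h) i j * ((2 : ℝ) ^ k)⁻¹ * x ^ i *
      y ^ (k - h - i)

theorem beliefSum_lt_beliefSum {k n : ℕ} {x y y' : ℝ} (hk : 1 ≤ k) (hx : 0 ≤ x) (hy : 0 ≤ y)
    (hyy' : y < y') : beliefSum k n x y < beliefSum k n x y' := by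
  have term_le (h i : ℕ) (j : Fin n → ℕ) (hi : i < k - h) (hj : ∀ a, j a < k - h) :
      (k.choose (k - h) : ℝ) * inclusionExclusionBracket (k - h) i j * ((2 : ℝ) ^ k)⁻¹ * x ^ i *
        y ^ (k - h - i) ≤
      (k.choose (k - h) : ℝ) * inclusionExclusionBracket (k - h) i j * ((2 : ℝ) ^ k)⁻¹ * x ^ i *
        y' ^ (k - h - i) := by
    have := inclusionExclusionBracket_nonneg hi.le fun a => (hj a).le
    gcongr
  refine sum_lt_sum (fun h _ => sum_le_sum fun i hi => sum_le_sum fun j hj =>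
    term_le h i j (mem_range.1 hi) fun a => mem_range.1 (Fintype.mem_piFinset.1 hj a))
    ⟨k - 1, mem_range.2 (by omega), ?_⟩
  have hone : k - (k - 1) = 1 := by omega
  have hsingle : Fintype.piFinset (fun _ : Fin n => range 1) = {fun _ => 0} := by
    ext j; simp [funext_iff]
  simp only [hone, sum_range_one, hsingle, sum_singleton, inclusionExclusionBracket_zero]
  have : 0 < k := hk
  gcongr
  simpa

theorem expectedBeliefTrue_gt_cooccur_general (k l : ℕ) (p₁ p₂ p₃ : ℝ)
    (hk : 1 ≤ k) (hl : 3 ≤ l)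
    (hp₁ : p₁ ∈ Set.Ioo (0 : ℝ) 1)
    (h23 : p₃ ≤ p₂) (h3 : 0 < p₃) :
    expectedBeliefCooccur k l p₁ p₃ < expectedBeliefTrue k l p₁ p₂ := by
  have two_le : (2 : ℝ) ≤ 2 ^ (l - 2) := le_self_pow₀ one_le_two (by omega)
  have pow_pred : (2 : ℝ) ^ (l - 1) = 2 * 2 ^ (l - 2) := by
    rw [← pow_succ']
    congr 1
    omega
  change beliefSum k (l - 2) _ _ < beliefSum k (l - 2) _ _
  apply beliefSum_lt_beliefSum hk
  · exact div_nonneg hp₁.1.le (by linarith)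
  · exact div_nonneg h3.le (by linarith)
  · calc p₃ / (2 ^ (l - 1) - 1) < p₃ / 2 ^ (l - 2) :=
          div_lt_div_of_pos_left h3 (by positivity) (by linarith)
      _ ≤ p₂ / 2 ^ (l - 2) := by gcongr

/-- Dominance of the true label's expected belief: for `k ≥ 1`, `l ≥ 3`, and
`p₁, p₂, p₃ ∈ (0, 1)` with `p₁ + p₂ + p₃ = 1` and `p₁ ≥ p₂ ≥ p₃ > 0`, we have
`E(k, l, p₁, p₂) > F(k, l, p₁, p₃)`. -/
theorem expectedBeliefTrue_gt_cooccur (k l : ℕ) (p₁ p₂ p₃ : ℝ)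
    (hk : 1 ≤ k) (hl : 3 ≤ l)
    (hp₁ : p₁ ∈ Set.Ioo (0 : ℝ) 1) (hp₂ : p₂ ∈ Set.Ioo (0 : ℝ) 1)
    (hp₃ : p₃ ∈ Set.Ioo (0 : ℝ) 1)
    (hsum : p₁ + p₂ + p₃ = 1)
    (h12 : p₂ ≤ p₁) (h23 : p₃ ≤ p₂) (h3 : 0 < p₃) :
    expectedBeliefCooccur k l p₁ p₃ < expectedBeliefTrue k l p₁ p₂ :=
  expectedBeliefTrue_gt_cooccur_general k l p₁ p₂ p₃ hk hl hp₁ h23 h3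
end
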